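/- If ξ is a random variable on {1,...,N} with Abelian distribution P_{α,N} (parameters N ≥ 1 an integer, α ∈ (0,1)), then its expectation equals N/(N-(N-1)α); equivalently, ∑_{L=1}^{N} L · C_{α,N} · binom(N,L) · (Lα/N)^{L-1} · (1 - Lα/N)^{N-L-1} = N/(N-(N-1)α). -/

import Mathlib

/-!
Write `N = n + 1`, `x = α / N` and `L = m + 1`. Since `L * choose N L = N * choose n m`, each
summand with `L < N` is `N / (1 - α)` times the `m`-th term of Abel's identity
`∑ m < n, choose n m * (x + m z) ^ m * y * (y + (n - m) z) ^ (n - m - 1) + (x + n z) ^ n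
  = (x + y + n z) ^ n`
at `y = 1 - α`, `z = x`, whose right-hand side is `1`. The summands with `L < N` therefore add up
to `N (1 - α ^ n) / (1 - α)`, and the summand `L = N` is `N α ^ n / (1 - α)`.

Abel's identity is proved by induction on `n`: both sides, as functions of `x`, have derivative
`n` times the instance for `n - 1` at `x + z`, and both vanish at `x = -(y + n z)`, where the
left-hand side becomes an `n`-th finite difference of a polynomial of degree `n - 1`.
-/

open Finset

open Polynomial in
theorem sum_range_neg_one_pow_mul_choose_mul_add_mul_pow {R : Type*} [CommRing R] {j n : ℕ}
    (hj : j < n) (a b : R) :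
    ∑ k ∈ range (n + 1), (-1) ^ k * n.choose k * (a + k * b) ^ j = 0 := by
  have hdeg : ((C b * X + C a) ^ j).natDegree < n :=
    (natDegree_pow_le_of_le j natDegree_linear_le).trans_lt (by rwa [mul_one])
  have hdiff := congrFun (fwdDiff_iter_eq_zero_of_degree_lt hdeg) 0
  simp only [fwdDiff_iter_eq_sum_shift, eval_pow, eval_add, eval_mul, eval_C, eval_X, zero_add,
    nsmul_one, Int.cast_mul, Int.cast_pow, Int.cast_neg, Int.cast_one, Int.cast_natCast,
    zsmul_eq_mul, Pi.zero_apply] at hdiff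
  rw [← mul_eq_zero_of_right ((-1) ^ n) hdiff, mul_sum]
  refine sum_congr rfl fun k hk ↦ ?_
  have hsign : ((-1 : R) ^ (n - k)) * (-1) ^ (n - k) = 1 := by
    rw [← mul_pow, neg_one_mul, neg_neg, one_pow]
  have hpow : ((-1 : R) ^ n) = (-1) ^ (n - k) * (-1) ^ k := by
    rw [← pow_add, Nat.sub_add_cancel (Nat.le_of_lt_succ (mem_range.mp hk))]
  rw [hpow]
  linear_combination (-1) ^ k * n.choose k * (a + k * b) ^ j * hsign.symm

/-- The last term `(x + n z) ^ n` is the term `k = n` of the sum, `(x + n z) ^ n * y * y⁻¹`,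
written without the division by `y`. -/
noncomputable def abelSum (n : ℕ) (x y z : ℝ) : ℝ :=
  ∑ k ∈ range n, n.choose k * (x + k * z) ^ k * y * (y + (n - k) * z) ^ (n - k - 1) +
    (x + n * z) ^ n

theorem hasDerivAt_abelSum_succ (n : ℕ) (x y z : ℝ) :
    HasDerivAt (fun x ↦ abelSum (n + 1) x y z) ((n + 1) * abelSum n (x + z) y z) x := by
  have hterm (k : ℕ) := ((((hasDerivAt_id' x).add_const (k * z)).fun_pow k).const_mul
    (((n + 1).choose k : ℕ) : ℝ)).mul_const y
    |>.mul_const ((y + ((n + 1 : ℕ) - k) * z) ^ (n + 1 - k - 1))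
  refine ((HasDerivAt.fun_sum fun k _ ↦ hterm k).add
    (((hasDerivAt_id' x).add_const (((n + 1 : ℕ) : ℝ) * z)).fun_pow (n + 1))).congr_deriv ?_
  rw [sum_range_succ', abelSum, mul_add, mul_sum]
  simp only [Nat.cast_zero, zero_mul, mul_zero, add_zero]
  push_cast
  congr 1
  · refine sum_congr rfl fun k _ ↦ ?_
    have hchoose : ((n + 1 : ℕ) : ℝ) * n.choose k = (n + 1).choose (k + 1) * (k + 1 : ℕ) := by
      exact_mod_cast Nat.add_one_mul_choose_eq n k
    push_cast at hchoose
    rw [show x + (k + 1) * z = x + z + k * z by ring]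
    linear_combination (x + z + k * z) ^ k * y * (y + (n - k) * z) ^ (n - k - 1) * hchoose.symm
  · ring

theorem abelSum_succ_eq_zero {n : ℕ} {x y z : ℝ} (h : x + y + (n + 1) * z = 0) :
    abelSum (n + 1) x y z = 0 := by
  have hx : x = -(y + (n + 1) * z) := by linear_combination h
  rw [abelSum, ← mul_eq_zero_of_right y (sum_range_neg_one_pow_mul_choose_mul_add_mul_pow
    (Nat.lt_succ_self n) (y + (n + 1) * z) (-z)), sum_range_succ _ (n + 1), mul_add, mul_sum]
  push_cast
  congr 1
  · refine sum_congr rfl fun k hk ↦ ?_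
    have hkn : k ≤ n := Nat.le_of_lt_succ (mem_range.mp hk)
    rw [hx, show -(y + (n + 1) * z) + k * z = -(y + (n + 1) * z + k * -z) by ring,
      show y + (n + 1 - k) * z = y + (n + 1) * z + k * -z by ring, neg_pow,
      show n + 1 - k - 1 = n - k by omega, ← pow_mul_pow_sub _ hkn]
    ring
  · rw [hx, Nat.choose_self]
    ring

theorem abelSum_eq (n : ℕ) (x y z : ℝ) : abelSum n x y z = (x + y + n * z) ^ n := by
  induction n generalizing x with
  | zero => simp [abelSum]
  | succ n ih =>
    have hG (x : ℝ) : HasDerivAt (fun x ↦ (x + y + (n + 1 : ℕ) * z) ^ (n + 1))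
        ((n + 1) * abelSum n (x + z) y z) x := by
      refine (((hasDerivAt_id' x).add_const y).add_const _).fun_pow (n + 1) |>.congr_deriv ?_
      rw [ih]
      push_cast
      ring
    refine isOpen_univ.eqOn_of_deriv_eq isPreconnected_univ
      (fun x _ ↦ (hasDerivAt_abelSum_succ n x y z).differentiableAt.differentiableWithinAt)
      (fun x _ ↦ (hG x).differentiableAt.differentiableWithinAt)
      (fun x _ ↦ (hasDerivAt_abelSum_succ n x y z).deriv.trans (hG x).deriv.symm)
      (Set.mem_univ (-(y + (n + 1) * z))) ?_ (Set.mem_univ x)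
    rw [abelSum_succ_eq_zero (by ring)]
    push_cast
    ring

theorem sum_Icc_mul_choose_mul_pow_mul_zpow (N : ℕ) {α : ℝ} (hα : α ≠ 1) :
    ∑ L ∈ Icc 1 N,
        (L : ℝ) * N.choose L * (L * α / N) ^ (L - 1) * (1 - L * α / N) ^ ((N : ℤ) - L - 1)
      = N / (1 - α) := by
  rcases N with _ | n
  · simp
  have hα' : 1 - α ≠ 0 := sub_ne_zero.mpr hα.symm
  set x := α / (n + 1) with hx
  have hαx : α = (n + 1) * x := by rw [hx]; field_simp
  have habel : ∑ m ∈ range n,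
      n.choose m * (x + m * x) ^ m * (1 - α) * (1 - α + (n - m) * x) ^ (n - m - 1) = 1 - α ^ n := by
    have h := abelSum_eq n x (1 - α) x
    rw [abelSum, show x + (1 - α) + n * x = 1 by rw [hαx]; ring, one_pow,
      show x + n * x = α by rw [hαx]; ring] at h
    linear_combination h
  rw [← Ico_add_one_right_eq_Icc, ← sum_Ico_add' _ 0 (n + 1) 1, ← range_eq_Ico, sum_range_succ]
  push_cast
  simp only [mul_div_assoc, ← hx]
  have hterm (m : ℕ) (hm : m ∈ range n) :
      (m + 1) * ((n + 1).choose (m + 1) : ℝ) * ((m + 1) * x) ^ m *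
          (1 - (m + 1) * x) ^ ((n : ℤ) + 1 - (m + 1) - 1)
        = (n + 1) / (1 - α) *
          (n.choose m * (x + m * x) ^ m * (1 - α) * (1 - α + (n - m) * x) ^ (n - m - 1)) := by
    have hchoose : ((n + 1 : ℕ) : ℝ) * n.choose m = (n + 1).choose (m + 1) * (m + 1 : ℕ) := by
      exact_mod_cast Nat.add_one_mul_choose_eq n m
    push_cast at hchoose
    rw [show (n : ℤ) + 1 - (m + 1) - 1 = (n - m - 1 : ℕ) by have := mem_range.mp hm; omega,
      zpow_natCast, show 1 - α + (n - m) * x = 1 - (m + 1) * x by rw [hαx]; ring]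
    field_simp
    linear_combination (x + m * x) ^ m * (1 - (m + 1) * x) ^ (n - m - 1) * hchoose.symm
  rw [sum_congr rfl hterm, ← mul_sum, habel, Nat.choose_self, show (n + 1) * x = α by rw [hαx],
    show (n : ℤ) + 1 - (n + 1) - 1 = -1 by ring, zpow_neg_one, Nat.cast_one]
  field_simp
  ring

theorem abelian_expectation_general (N : ℕ) (α : ℝ) (hα1 : α < 1) :
    ∑ L ∈ Finset.Icc 1 N,
      (L : ℝ) * ((1 - α) / (N - (N - 1) * α)) * (N.choose L) *
        (L * α / N) ^ (L - 1) * (1 - L * α / N) ^ ((N : ℤ) - L - 1) =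
      N / (N - (N - 1) * α) := by
  have hα : 1 - α ≠ 0 := sub_ne_zero.mpr hα1.ne'
  convert congrArg ((1 - α) / (N - (N - 1) * α) * ·)
    (sum_Icc_mul_choose_mul_pow_mul_zpow N hα1.ne) using 1
  · rw [mul_sum]
    exact sum_congr rfl fun L _ ↦ by ring
  · rw [div_mul_div_comm, mul_comm (1 - α), mul_div_mul_right _ _ hα]

theorem abelian_expectation (N : ℕ) (hN : 1 ≤ N) (α : ℝ) (hα0 : 0 < α) (hα1 : α < 1) :
    ∑ L ∈ Finset.Icc 1 N,
      (L : ℝ) * ((1 - α) / (N - (N - 1) * α)) * (N.choose L) *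
        (L * α / N) ^ (L - 1) * (1 - L * α / N) ^ ((N : ℤ) - L - 1) =
      N / (N - (N - 1) * α) :=
  abelian_expectation_general N α hα1
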